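/- The map χₚ[d₀,d] := χ[d₀,d] − d ⊗ d₀ restricts to a linear bijection from the tangent plane T_{d₀}S² = {v ∈ ℝ³ : v·d₀ = 0} onto T_d S² = {v ∈ ℝ³ : v·d = 0}, and its kernel on ℝ³ is span(d₀). -/

import Mathlib

open Matrix Real

noncomputable def skewM (w : Fin 3 → ℝ) : Matrix (Fin 3) (Fin 3) ℝ :=
  !![0, -w 2, w 1; w 2, 0, -w 0; -w 1, w 0, 0]

noncomputable def chiR (d₀ d : Fin 3 → ℝ) : Matrix (Fin 3) (Fin 3) ℝ :=
  (d₀ ⬝ᵥ d) • (1 : Matrix (Fin 3) (Fin 3) ℝ) + skewM (d₀ ⨯₃ d)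
    + (1 / (1 + d₀ ⬝ᵥ d)) • vecMulVec (d₀ ⨯₃ d) (d₀ ⨯₃ d)

noncomputable def nrm (w : Fin 3 → ℝ) : ℝ := Real.sqrt (w ⬝ᵥ w)

/-!
Since `χ d₀ = d`, we have `χₚ = χ (I - d₀ ⊗ d₀)`: the orthogonal projection onto `d₀⊥` followed by
`χ`. The projection kills exactly `span d₀` and fixes `d₀⊥`, and `χ` is orthogonal, so it carries
`d₀⊥` onto `(χ d₀)⊥ = d⊥`. Orthogonality of `χ` is the identity
`χᵀχ = (c² + |w|²) I + (2ck + k²|w|² - 1) w ⊗ w` for `χ = c I + [w]ₓ + k w ⊗ w`, evaluated at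
`c = d₀ · d`, `w = d₀ × d`, `k = 1 / (1 + c)`, where `|w|² = 1 - c²`.
-/

section Orthogonal

variable {n R : Type*} [Fintype n] [CommRing R] {Q : Matrix n n R}

lemma sub_vecMulVec_mulVec {a b : n → R} (hab : Q *ᵥ a = b) (v : n → R) :
    (Q - vecMulVec b a) *ᵥ v = Q *ᵥ (v - (a ⬝ᵥ v) • a) := by
  rw [sub_mulVec, vecMulVec_mulVec, op_smul_eq_smul, mulVec_sub, mulVec_smul, hab]

lemma sub_dotProduct_smul_eq_zero_iff_mem_span {a : n → R} (ha : a ⬝ᵥ a = 1) (v : n → R) :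
    v - (a ⬝ᵥ v) • a = 0 ↔ v ∈ Submodule.span R {a} := by
  rw [Submodule.mem_span_singleton, sub_eq_zero]
  refine ⟨fun hv => ⟨_, hv.symm⟩, ?_⟩
  rintro ⟨t, rfl⟩
  rw [dotProduct_smul, ha, smul_eq_mul, mul_one]

variable [DecidableEq n]

lemma dotProduct_mulVec_mulVec_of_transpose_mul_self (hQ : Qᵀ * Q = 1) (u v : n → R) :
    Q *ᵥ u ⬝ᵥ Q *ᵥ v = u ⬝ᵥ v := by
  rw [dotProduct_mulVec, ← vecMul_transpose, vecMul_vecMul, hQ, vecMul_one]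

lemma mulVec_bijective_of_transpose_mul_self (hQ : Qᵀ * Q = 1) :
    Function.Bijective (Q *ᵥ ·) := by
  refine Function.bijective_iff_has_inverse.mpr ⟨(Qᵀ *ᵥ ·), fun v => ?_, fun v => ?_⟩
  · simp only [mulVec_mulVec, hQ, one_mulVec]
  · simp only [mulVec_mulVec, mul_eq_one_comm.mp hQ, one_mulVec]

lemma bijOn_mulVec_orthogonalComplement (hQ : Qᵀ * Q = 1) {a b : n → R} (hab : Q *ᵥ a = b) :
    Set.BijOn (Q *ᵥ ·) {v | v ⬝ᵥ a = 0} {v | v ⬝ᵥ b = 0} := by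
  have hpre : (Q *ᵥ ·) ⁻¹' {v | v ⬝ᵥ b = 0} = {v | v ⬝ᵥ a = 0} := by
    ext v
    simp only [Set.mem_preimage, Set.mem_ofPred_eq, ← hab,
      dotProduct_mulVec_mulVec_of_transpose_mul_self hQ]
  exact hpre ▸ (mulVec_bijective_of_transpose_mul_self hQ).bijOn_preimage

theorem bijOn_sub_vecMulVec_of_transpose_mul_self (hQ : Qᵀ * Q = 1) {a b : n → R}
    (ha : a ⬝ᵥ a = 1) (hab : Q *ᵥ a = b) :
    Set.BijOn ((Q - vecMulVec b a) *ᵥ ·) {v | v ⬝ᵥ a = 0} {v | v ⬝ᵥ b = 0} ∧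
    ∀ v, (Q - vecMulVec b a) *ᵥ v = 0 ↔ v ∈ Submodule.span R {a} := by
  refine ⟨(bijOn_mulVec_orthogonalComplement hQ hab).congr fun v (hv : v ⬝ᵥ a = 0) => ?_,
    fun v => ?_⟩
  · rw [sub_vecMulVec_mulVec hab, dotProduct_comm, hv, zero_smul, sub_zero]
  · rw [sub_vecMulVec_mulVec hab, ← mulVec_zero Q,
      (mulVec_bijective_of_transpose_mul_self hQ).injective.eq_iff,
      sub_dotProduct_smul_eq_zero_iff_mem_span ha]

end Orthogonal

lemma skewM_mulVec (w v : Fin 3 → ℝ) : skewM w *ᵥ v = w ⨯₃ v := by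
  ext i
  fin_cases i <;> simp [skewM, crossProduct, mulVec, dotProduct, Fin.sum_univ_three] <;> ring

lemma rodrigues_transpose_mul_self (c k : ℝ) (w : Fin 3 → ℝ) :
    (c • 1 + skewM w + k • vecMulVec w w)ᵀ * (c • 1 + skewM w + k • vecMulVec w w) =
      (c ^ 2 + w ⬝ᵥ w) • 1 + (2 * c * k + k ^ 2 * (w ⬝ᵥ w) - 1) • vecMulVec w w := by
  ext i j
  fin_cases i <;> fin_cases j <;>
    simp [skewM, vecMulVec, mul_apply, vec3_dotProduct, Fin.sum_univ_three, one_apply] <;> ring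

lemma chiR_transpose_mul_self {d₀ d : Fin 3 → ℝ} (h₀ : d₀ ⬝ᵥ d₀ = 1) (h₁ : d ⬝ᵥ d = 1)
    (h : d₀ ⬝ᵥ d ≠ -1) : (chiR d₀ d)ᵀ * chiR d₀ d = 1 := by
  have hden : 1 + d₀ ⬝ᵥ d ≠ 0 := fun h' => h (by linarith)
  have hw : (d₀ ⨯₃ d) ⬝ᵥ (d₀ ⨯₃ d) = 1 - (d₀ ⬝ᵥ d) ^ 2 := by
    rw [cross_dot_cross, h₀, h₁, dotProduct_comm d d₀]; ring
  rw [chiR, rodrigues_transpose_mul_self, hw]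
  have hk : 2 * (d₀ ⬝ᵥ d) * (1 / (1 + d₀ ⬝ᵥ d)) + (1 / (1 + d₀ ⬝ᵥ d)) ^ 2 * (1 - (d₀ ⬝ᵥ d) ^ 2)
      - 1 = 0 := by
    field_simp; ring
  rw [hk, zero_smul, add_zero, add_sub_cancel, one_smul]

lemma chiR_mulVec_self {d₀ d : Fin 3 → ℝ} (h₀ : d₀ ⬝ᵥ d₀ = 1) :
    chiR d₀ d *ᵥ d₀ = d := by
  rw [chiR, add_mulVec, add_mulVec, smul_mulVec, one_mulVec, skewM_mulVec, smul_mulVec,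
    vecMulVec_mulVec, op_smul_eq_smul, dotProduct_comm (d₀ ⨯₃ d), dot_self_cross,
    cross_cross_eq_smul_sub_smul, h₀, dotProduct_comm d d₀]
  simp

theorem chiP_tangent_bijection (d₀ d : Fin 3 → ℝ) (h₀ : d₀ ⬝ᵥ d₀ = 1)
    (h₁ : d ⬝ᵥ d = 1) (h : d₀ ⬝ᵥ d ≠ -1) :
    Set.BijOn (fun v => (chiR d₀ d - vecMulVec d d₀) *ᵥ v)
      {v : Fin 3 → ℝ | v ⬝ᵥ d₀ = 0} {v : Fin 3 → ℝ | v ⬝ᵥ d = 0} ∧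
    ∀ v : Fin 3 → ℝ,
      (chiR d₀ d - vecMulVec d d₀) *ᵥ v = 0 ↔ v ∈ Submodule.span ℝ {d₀} :=
  bijOn_sub_vecMulVec_of_transpose_mul_self (chiR_transpose_mul_self h₀ h₁ h) h₀
    (chiR_mulVec_self h₀)
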